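/- arXiv:2503.16723 — 5 statements merged into one kernel-verified Lean document; each statement's English description precedes it below -/
import Mathlib

section
/- If f, g ∈ L^1_+(ℝ^d) are both symmetric decreasing, then their convolution f ⋆ g is symmetric decreasing. -/
open MeasureTheory Set Metric ENNReal
open RealInnerProductSpace

noncomputable section

abbrev Rd (d : ℕ) := EuclideanSpace ℝ (Fin d)

/-- `f` is symmetric decreasing: radial, and nonincreasing in the radius. -/
def IsSymmDec {d : ℕ} (f : Rd d → ℝ) : Prop :=
  ∀ x y : Rd d, ‖x‖ ≤ ‖y‖ → f y ≤ f x

private lemma sq_le_helper {a b : ℝ} (_ha : 0 ≤ a) (hb : 0 ≤ b) (h : a ^ 2 ≤ b ^ 2) : a ≤ b := by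
  nlinarith

private lemma integrable_conv_aux {d : ℕ} {f g : Rd d → ℝ} (hf : Integrable f)
    (hg : Integrable g) (hf0 : ∀ x, 0 ≤ f x) (hg0 : ∀ x, 0 ≤ g x) (hfd : IsSymmDec f)
    (a : Rd d) : Integrable (fun z : Rd d => f (a - z) * g z) := by
  have hb : ∀ z : Rd d, f z ≤ f 0 := fun z => hfd 0 z (by simp)
  have hmp : MeasurePreserving (fun z : Rd d => a - z) volume volume := by
    have h : (fun z : Rd d => a - z) = (fun z => a + z) ∘ (fun z => -z) := by
      funext z; simp [sub_eq_add_neg]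
    rw [h]
    exact (measurePreserving_add_left volume a).comp (Measure.measurePreserving_neg volume)
  have hm : AEStronglyMeasurable (fun z : Rd d => f (a - z)) volume :=
    hf.aestronglyMeasurable.comp_quasiMeasurePreserving hmp.quasiMeasurePreserving
  refine Integrable.mono' (hg.const_mul (f 0)) (hm.mul hg.aestronglyMeasurable)
    (ae_of_all _ fun z => ?_)
  rw [norm_mul, Real.norm_eq_abs, Real.norm_eq_abs, abs_of_nonneg (hf0 _),
    abs_of_nonneg (hg0 _)]
  exact mul_le_mul_of_nonneg_right (hb _) (hg0 z)

set_option maxHeartbeats 1000000 in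
/-- The convolution of two nonnegative integrable symmetric decreasing functions is
symmetric decreasing. -/
theorem stmt4 {d : ℕ} (f g : Rd d → ℝ)
    (hf : Integrable f) (hg : Integrable g)
    (hf0 : ∀ x, 0 ≤ f x) (hg0 : ∀ x, 0 ≤ g x)
    (hfd : IsSymmDec f) (hgd : IsSymmDec g) :
    IsSymmDec (fun x => ∫ y, f (x - y) * g y) := by
  intro x y hxy
  simp only
  by_cases hxyeq : x = y
  · rw [hxyeq]
  -- basic facts about f and g
  have hb : ∀ z : Rd d, f z ≤ f 0 := fun z => hfd 0 z (by simp)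
  have frad : ∀ a b : Rd d, ‖a‖ = ‖b‖ → f a = f b := fun a b h =>
    le_antisymm (hfd b a h.ge) (hfd a b h.le)
  have hintx := integrable_conv_aux hf hg hf0 hg0 hfd x
  have hinty := integrable_conv_aux hf hg hf0 hg0 hfd y
  -- setup: reflection across perpendicular bisector of x and y
  set v : Rd d := y - x with hv
  have hv0 : v ≠ 0 := sub_ne_zero.2 (Ne.symm hxyeq)
  have hvn : ‖v‖ ≠ 0 := norm_ne_zero_iff.2 hv0
  set m : Rd d := (2:ℝ)⁻¹ • (x + y) with hm
  set R : Rd d ≃ₗᵢ[ℝ] Rd d := Submodule.reflection (ℝ ∙ v)ᗮ with hR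
  have hRv : R v = -v := Submodule.reflection_orthogonalComplement_singleton_eq_neg v
  set σ : Rd d → Rd d := fun z => R (z - m) + m with hσ
  have hσmp : MeasurePreserving σ volume volume :=
    ((measurePreserving_add_right volume m).comp
      (R.measurePreserving.comp (measurePreserving_sub_right volume m)))
  have hσemb : MeasurableEmbedding σ :=
    ((Homeomorph.subRight m).trans (R.toHomeomorph.trans
      (Homeomorph.addRight m))).measurableEmbedding
  have hσinv : ∀ z, σ (σ z) = z := fun z => by
    show R (R (z - m) + m - m) + m = z
    rw [add_sub_cancel_right, hR]
    rw [Submodule.reflection_reflection, sub_add_cancel]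
  have hσd : ∀ a b, ‖σ a - σ b‖ = ‖a - b‖ := fun a b => by
    have h : σ a - σ b = R (a - b) := by
      show R (a - m) + m - (R (b - m) + m) = R (a - b)
      rw [show R (a - m) + m - (R (b - m) + m) = R (a - m) - R (b - m) by abel, ← map_sub,
        show a - m - (b - m) = a - b by abel]
    rw [h, R.norm_map]
  -- σ swaps x and y
  have hxm : x - m = -((2:ℝ)⁻¹ • v) := by rw [hm, hv]; module
  have hym : y - m = (2:ℝ)⁻¹ • v := by rw [hm, hv]; module
  have hRsmul : ∀ c : ℝ, R (c • v) = c • -v := fun c => by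
    rw [R.map_smul, hRv]
  have hσx : σ x = y := by
    show R (x - m) + m = y
    rw [hxm, map_neg, hRsmul]
    rw [show -((2:ℝ)⁻¹ • -v) + m = (2:ℝ)⁻¹ • v + m by module, ← hym]
    abel
  have hσy : σ y = x := by
    show R (y - m) + m = x
    rw [hym, hRsmul]
    rw [show (2:ℝ)⁻¹ • -v + m = -((2:ℝ)⁻¹ • v) + m by module, ← hxm]
    abel
  -- norm comparison via the linear functional z ↦ ⟪z - m, v⟫
  have key_norm : ∀ z : Rd d, ‖z - x‖ ^ 2 - ‖z - y‖ ^ 2 = 2 * ⟪z - m, v⟫ := by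
    intro z
    have h1 : z - x = (z - m) + (2:ℝ)⁻¹ • v := by rw [hm, hv]; module
    have h2 : z - y = (z - m) - (2:ℝ)⁻¹ • v := by rw [hm, hv]; module
    have e1 := norm_add_sq_real (z - m) ((2:ℝ)⁻¹ • v)
    have e2 := norm_sub_sq_real (z - m) ((2:ℝ)⁻¹ • v)
    have e3 := real_inner_smul_right (z - m) v (2:ℝ)⁻¹
    rw [e3] at e1 e2
    rw [h1, h2, e1, e2]
    ring
  have hinner_σ : ∀ z : Rd d, ⟪σ z - m, v⟫ = -⟪z - m, v⟫ := by
    intro z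
    have h1 : σ z - m = R (z - m) := by
      show R (z - m) + m - m = R (z - m); rw [add_sub_cancel_right]
    rw [h1]
    calc ⟪R (z - m), v⟫ = ⟪R (z - m), -(R v)⟫ := by rw [hRv, neg_neg]
      _ = -⟪R (z - m), R v⟫ := inner_neg_right _ _
      _ = -⟪z - m, v⟫ := by rw [R.inner_map_map]
  -- the inner product of v with m is nonnegative
  have hinner_vm : ⟪v, m⟫ = 2⁻¹ * (‖y‖ ^ 2 - ‖x‖ ^ 2) := by
    have e1 := real_inner_smul_right (y - x) (x + y) (2:ℝ)⁻¹
    have e2 : ⟪y - x, x + y⟫ = ⟪y, x⟫ + ⟪y, y⟫ - (⟪x, x⟫ + ⟪x, y⟫) := by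
      rw [inner_sub_left, inner_add_right, inner_add_right]
    rw [hv, hm, e1, e2, real_inner_self_eq_norm_sq, real_inner_self_eq_norm_sq,
      real_inner_comm y x]
    ring
  have ht0 : (0:ℝ) ≤ ⟪v, m⟫ := by
    rw [hinner_vm]
    nlinarith [norm_nonneg x, norm_nonneg y]
  set t : ℝ := ⟪v, m⟫ / ‖v‖ ^ 2 with htdef
  have htnn : 0 ≤ t := div_nonneg ht0 (by positivity)
  have htv : t * ‖v‖ ^ 2 = ⟪v, m⟫ := by rw [htdef]; field_simp
  -- compute σ 0
  have hmdec : m - t • v ∈ (ℝ ∙ v)ᗮ := by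
    rw [Submodule.mem_orthogonal_singleton_iff_inner_right]
    have e1 : ⟪v, m - t • v⟫ = ⟪v, m⟫ - t * ⟪v, v⟫ := by
      rw [inner_sub_right]
      congr 1
      exact real_inner_smul_right v v t
    have e2 : ⟪v, v⟫ = ‖v‖ ^ 2 := real_inner_self_eq_norm_sq v
    rw [e1, e2]
    linarith [htv]
  have hRm : R m = m - (2 * t) • v := by
    have h1 : m = (m - t • v) + t • v := by abel
    conv_lhs => rw [h1]
    rw [map_add, hRsmul, hR, Submodule.reflection_mem_subspace_eq_self hmdec]
    module
  have hσ0 : σ 0 = (2 * t) • v := by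
    show R (0 - m) + m = (2 * t) • v
    rw [zero_sub, map_neg, hRm]
    module
  -- growth: points on the x-side have ‖w‖ ≤ ‖σ w‖
  have hgrow : ∀ w : Rd d, ⟪w - m, v⟫ ≤ 0 → ‖w‖ ≤ ‖σ w‖ := by
    intro w hw
    have h0 : ‖σ w‖ = ‖w - σ 0‖ := by
      have h := hσd w (σ 0)
      rw [hσinv 0, sub_zero] at h
      exact h
    rw [h0, hσ0]
    have hwv : ⟪w, v⟫ ≤ t * ‖v‖ ^ 2 := by
      have h2 : ⟪w - m, v⟫ = ⟪w, v⟫ - ⟪m, v⟫ := inner_sub_left w m v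
      have h3 : ⟪m, v⟫ = ⟪v, m⟫ := real_inner_comm v m
      rw [htv, ← h3]
      linarith [h2 ▸ hw]
    have e1 : ‖w - (2 * t) • v‖ ^ 2
        = ‖w‖ ^ 2 - 2 * ((2 * t) * ⟪w, v⟫) + (2 * t) ^ 2 * ‖v‖ ^ 2 := by
      have e2 := norm_sub_sq_real w ((2 * t) • v)
      have e3 := real_inner_smul_right w v (2 * t)
      have e4 : ‖(2 * t) • v‖ ^ 2 = (2 * t) ^ 2 * ‖v‖ ^ 2 := by
        rw [norm_smul, Real.norm_eq_abs, mul_pow, sq_abs]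
      rw [e2, e3, e4]
    refine sq_le_helper (norm_nonneg _) (norm_nonneg _) ?_
    rw [e1]
    nlinarith [mul_le_mul_of_nonneg_left hwv htnn]
  -- the function D and its integrability
  set D : Rd d → ℝ := fun z => f (x - z) * g z - f (y - z) * g z with hD
  have hDint : Integrable D := hintx.sub hinty
  -- the companion function E
  have hgσ : Integrable (g ∘ σ) := (hσmp.integrable_comp_emb hσemb).2 hg
  set E : Rd d → ℝ := fun w => (f (y - w) - f (x - w)) * g (σ w) with hE
  have hEint : Integrable E := by
    have hsubmp : ∀ a : Rd d, MeasurePreserving (fun z : Rd d => a - z) volume volume := by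
      intro a
      have h : (fun z : Rd d => a - z) = (fun z => a + z) ∘ (fun z => -z) := by
        funext z; simp [sub_eq_add_neg]
      rw [h]
      exact (measurePreserving_add_left volume a).comp (Measure.measurePreserving_neg volume)
    have hm1 : AEStronglyMeasurable (fun w : Rd d => f (y - w)) volume :=
      hf.aestronglyMeasurable.comp_quasiMeasurePreserving (hsubmp y).quasiMeasurePreserving
    have hm2 : AEStronglyMeasurable (fun w : Rd d => f (x - w)) volume :=
      hf.aestronglyMeasurable.comp_quasiMeasurePreserving (hsubmp x).quasiMeasurePreserving
    have hm3 : AEStronglyMeasurable (g ∘ σ) volume :=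
      hg.aestronglyMeasurable.comp_quasiMeasurePreserving hσmp.quasiMeasurePreserving
    refine Integrable.mono' (hgσ.const_mul (f 0)) ((hm1.sub hm2).mul hm3)
      (ae_of_all _ fun w => ?_)
    rw [hE]
    simp only [norm_mul, Real.norm_eq_abs]
    rw [abs_of_nonneg (hg0 _)]
    refine mul_le_mul_of_nonneg_right ?_ (hg0 _)
    rw [abs_le]
    constructor
    · have := hb (x - w); have := hf0 (y - w); linarith
    · have := hb (y - w); have := hf0 (x - w); linarith
  -- the three regions
  have hφcont : Continuous fun z : Rd d => ⟪z - m, v⟫ :=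
    (continuous_id.sub continuous_const).inner continuous_const
  set S : Set (Rd d) := {z | ⟪z - m, v⟫ < 0} with hSdef
  set T : Set (Rd d) := {z | ⟪z - m, v⟫ = 0} with hTdef
  set U : Set (Rd d) := {z | 0 < ⟪z - m, v⟫} with hUdef
  have hS : MeasurableSet S := measurableSet_lt hφcont.measurable measurable_const
  have hU : MeasurableSet U := measurableSet_lt measurable_const hφcont.measurable
  have hSc : Sᶜ = T ∪ U := by
    ext z
    simp only [hSdef, hTdef, hUdef, mem_compl_iff, mem_setOf_eq, not_lt, mem_union]
    constructor
    · intro h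
      rcases h.lt_or_eq with h' | h'
      · exact Or.inr h'
      · exact Or.inl h'.symm
    · rintro (h | h)
      · exact h.ge
      · exact h.le
  -- split the integral
  have split1 : ∫ z, D z = (∫ z in S, D z) + ∫ z in Sᶜ, D z := (integral_add_compl hS hDint).symm
  have splitTU : ∫ z in T ∪ U, D z = (∫ z in T, D z) + ∫ z in U, D z := by
    refine setIntegral_union ?_ hU hDint.integrableOn hDint.integrableOn
    rw [Set.disjoint_left]
    intro z hz hz'
    exact hz'.ne' hz
  have hT0 : ∫ z in T, D z = 0 := by
    refine setIntegral_eq_zero_of_forall_eq_zero fun z hz => ?_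
    have h1 : ‖z - x‖ ^ 2 - ‖z - y‖ ^ 2 = 0 := by
      rw [key_norm z, hz, mul_zero]
    have h2 : ‖z - x‖ = ‖z - y‖ :=
      le_antisymm (sq_le_helper (norm_nonneg _) (norm_nonneg _) (by linarith))
        (sq_le_helper (norm_nonneg _) (norm_nonneg _) (by linarith))
    have h3 : f (x - z) = f (y - z) := frad _ _ (by rw [norm_sub_rev, h2, norm_sub_rev])
    rw [hD]
    simp only
    rw [h3]
    ring
  have hpre : σ ⁻¹' U = S := by
    ext w
    simp only [hUdef, hSdef, mem_preimage, mem_setOf_eq]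
    rw [hinner_σ w]
    exact neg_pos
  have hU_cov : ∫ z in U, D z = ∫ w in S, D (σ w) := by
    have h := hσmp.setIntegral_preimage_emb hσemb D U
    rw [hpre] at h
    exact h.symm
  have hDσ : ∀ w, D (σ w) = E w := by
    intro w
    have e1 : f (x - σ w) = f (y - w) := by
      refine frad _ _ ?_
      calc ‖x - σ w‖ = ‖σ y - σ w‖ := by rw [hσy]
        _ = ‖y - w‖ := hσd y w
    have e2 : f (y - σ w) = f (x - w) := by
      refine frad _ _ ?_
      calc ‖y - σ w‖ = ‖σ x - σ w‖ := by rw [hσx]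
        _ = ‖x - w‖ := hσd x w
    rw [hD, hE]
    simp only
    rw [e1, e2]
    ring
  have combine : (∫ w in S, D w) + ∫ w in S, E w
      = ∫ w in S, (f (x - w) - f (y - w)) * (g w - g (σ w)) := by
    rw [← integral_add hDint.integrableOn hEint.integrableOn]
    refine integral_congr_ae (ae_of_all _ fun w => ?_)
    rw [hD, hE]
    simp only
    ring
  have hnn : 0 ≤ ∫ w in S, (f (x - w) - f (y - w)) * (g w - g (σ w)) := by
    refine setIntegral_nonneg hS fun w hw => ?_
    have hw' : ⟪w - m, v⟫ < 0 := hw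
    have h1 : ‖w - x‖ ≤ ‖w - y‖ := by
      have := key_norm w
      refine sq_le_helper (norm_nonneg _) (norm_nonneg _) ?_
      nlinarith
    have h1' : ‖x - w‖ ≤ ‖y - w‖ := by
      rw [norm_sub_rev x, norm_sub_rev y]; exact h1
    have hfle : f (y - w) ≤ f (x - w) := hfd _ _ h1'
    have hgle : g (σ w) ≤ g w := hgd _ _ (hgrow w hw'.le)
    exact mul_nonneg (by linarith) (by linarith)
  -- conclude
  have hDsplit : ∫ z, D z = ∫ w in S, (f (x - w) - f (y - w)) * (g w - g (σ w)) := by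
    rw [split1, hSc, splitTU, hT0, hU_cov, zero_add,
      show (∫ w in S, D (σ w)) = ∫ w in S, E w from integral_congr_ae (ae_of_all _ fun w => hDσ w),
      combine]
  have hDval : ∫ z, D z = (∫ z, f (x - z) * g z) - ∫ z, f (y - z) * g z :=
    integral_sub hintx hinty
  have : 0 ≤ (∫ z, f (x - z) * g z) - ∫ z, f (y - z) * g z := by
    rw [← hDval, hDsplit]; exact hnn
  linarith
end
end

section
/- Let μ, ν be finite positive Borel measures on ℝ^d with ν symmetric decreasing. Let f : ℝ^d → [0,∞) be symmetric decreasing. If C_μ(α) ≤ C_ν(α) for all α ≥ 0 and μ is symmetric decreasing, then ∫ f dμ ≤ ∫ f dν. -/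
open MeasureTheory Set Metric ENNReal

noncomputable section

/-- Modulus of absolute continuity of a measure with respect to Lebesgue measure. -/
def Cmeas {d : ℕ} (μ : Measure (Rd d)) (α : ℝ) : ℝ≥0∞ :=
  ⨆ (E : Set (Rd d)) (_ : MeasurableSet E ∧ volume E = ENNReal.ofReal α), μ E

/-- A measure is symmetric decreasing if it is a symmetric decreasing density times
Lebesgue measure plus a nonnegative multiple of the Dirac mass at the origin. -/
def IsSymmDecMeasure {d : ℕ} (μ : Measure (Rd d)) : Prop :=
  ∃ (f : Rd d → ℝ≥0∞) (c : ℝ≥0∞),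
    (∀ x y : Rd d, ‖x‖ ≤ ‖y‖ → f y ≤ f x) ∧
    μ = volume.withDensity f + c • Measure.dirac (0 : Rd d)

/-- A radial nonincreasing function is measurable. -/
lemma measurable_of_radial {d : ℕ} (f : Rd d → ℝ)
    (hfd : ∀ x y : Rd d, ‖x‖ ≤ ‖y‖ → f y ≤ f x) : Measurable f := by
  rcases Nat.eq_zero_or_pos d with hd | hd
  · subst hd
    haveI : Subsingleton (Rd 0) := ⟨fun a b => PiLp.ext fun i => i.elim0⟩
    have : f = fun _ => f 0 := funext fun x => by rw [Subsingleton.elim x 0]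
    rw [this]; exact measurable_const
  · set e : Rd d := EuclideanSpace.single ⟨0, hd⟩ (1 : ℝ) with he
    have hne : ‖e‖ = 1 := by
      rw [he, EuclideanSpace.norm_single]; simp
    set h : ℝ → ℝ := fun t => f ((max t 0) • e) with hh
    have hnorm : ∀ t : ℝ, ‖(max t 0) • e‖ = max t 0 := by
      intro t
      rw [norm_smul, hne, mul_one, Real.norm_eq_abs, abs_of_nonneg (le_max_right t 0)]
    have hanti : Antitone h := by
      intro s t hst
      exact hfd _ _ (by rw [hnorm, hnorm]; exact max_le_max hst le_rfl)
    have hfeq : f = h ∘ norm := by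
      funext x
      have h1 : ‖(max ‖x‖ 0) • e‖ = ‖x‖ := by
        rw [hnorm, max_eq_left (norm_nonneg x)]
      exact le_antisymm (hfd _ _ h1.le) (hfd _ _ h1.ge)
    rw [hfeq]
    exact hanti.measurable.comp measurable_norm

/-- The bathtub principle: a radial set maximizes a symmetric decreasing measure
among sets of the same (finite) volume. -/
lemma bathtub {d : ℕ} (ν : Measure (Rd d)) (hν : IsSymmDecMeasure ν)
    (S : Set (Rd d)) (hSm : MeasurableSet S) (hS0 : (0 : Rd d) ∈ S)
    (hrad : ∀ x ∈ S, ∀ y : Rd d, ‖y‖ ≤ ‖x‖ → y ∈ S)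
    (hvol : volume S ≠ ⊤)
    (E : Set (Rd d)) (hEm : MeasurableSet E) (hE : volume E = volume S) :
    ν E ≤ ν S := by
  obtain ⟨g, c, hg, rfl⟩ := hν
  simp only [Measure.add_apply, Measure.smul_apply, smul_eq_mul]
  have hdirac : c * Measure.dirac (0 : Rd d) E ≤ c * Measure.dirac (0 : Rd d) S := by
    refine mul_le_mul_right ?_ c
    rw [Measure.dirac_apply_of_mem hS0]
    exact prob_le_one
  refine add_le_add ?_ hdirac
  rw [withDensity_apply _ hEm, withDensity_apply _ hSm]
  -- volume (E \ S) = volume (S \ E)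
  have hES : volume (E \ S) = volume (S \ E) := by
    have h1 : volume (E \ S) + volume (E ∩ S) = volume E := measure_diff_add_inter E hSm
    have h2 : volume (S \ E) + volume (S ∩ E) = volume S := measure_diff_add_inter S hEm
    rw [inter_comm] at h2
    have hfin : volume (E ∩ S) ≠ ⊤ :=
      fun h => hvol (by rw [← hE]; exact eq_top_mono (measure_mono inter_subset_left) h)
    have : volume (E \ S) + volume (E ∩ S) = volume (S \ E) + volume (E ∩ S) := by
      rw [h1, h2, hE]
    exact (ENNReal.add_left_inj hfin).mp this
  set M : ℝ≥0∞ := ⨆ z ∈ E \ S, g z with hM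
  have hboundE : ∫⁻ x in E \ S, g x ≤ M * volume (E \ S) := by
    calc ∫⁻ x in E \ S, g x ≤ ∫⁻ _ in E \ S, M :=
          setLIntegral_mono' (hEm.diff hSm) fun z hz => le_biSup g hz
      _ = M * volume (E \ S) := by rw [setLIntegral_const]
  have hboundS : M * volume (S \ E) ≤ ∫⁻ x in S \ E, g x := by
    calc M * volume (S \ E) = ∫⁻ _ in S \ E, M := by rw [setLIntegral_const]
      _ ≤ ∫⁻ x in S \ E, g x := by
          refine setLIntegral_mono' (hSm.diff hEm) fun x hx => ?_
          refine iSup₂_le fun z hz => ?_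
          apply hg
          by_contra hle
          push_neg at hle
          exact hz.2 (hrad x hx.1 z hle.le)
  calc ∫⁻ x in E, g x ∂volume
      = ∫⁻ x in E ∩ S, g x ∂volume + ∫⁻ x in E \ S, g x ∂volume :=
        (lintegral_inter_add_diff g E hSm).symm
    _ ≤ ∫⁻ x in E ∩ S, g x ∂volume + M * volume (E \ S) := add_le_add le_rfl hboundE
    _ = ∫⁻ x in S ∩ E, g x ∂volume + M * volume (S \ E) := by rw [inter_comm, hES]
    _ ≤ ∫⁻ x in S ∩ E, g x ∂volume + ∫⁻ x in S \ E, g x ∂volume := add_le_add le_rfl hboundS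
    _ = ∫⁻ x in S, g x ∂volume := lintegral_inter_add_diff g S hEm

/-- Testing the relation "less concentrated than" against symmetric decreasing
functions. -/
theorem stmt6 {d : ℕ} (μ ν : Measure (Rd d)) [IsFiniteMeasure μ] [IsFiniteMeasure ν]
    (hν : IsSymmDecMeasure ν) (hμ : IsSymmDecMeasure μ)
    (hC : ∀ α : ℝ, 0 ≤ α → Cmeas μ α ≤ Cmeas ν α)
    (f : Rd d → ℝ) (hf0 : ∀ x, 0 ≤ f x)
    (hfd : ∀ x y : Rd d, ‖x‖ ≤ ‖y‖ → f y ≤ f x) :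
    ∫⁻ x, ENNReal.ofReal (f x) ∂μ ≤ ∫⁻ x, ENNReal.ofReal (f x) ∂ν := by
  have hfm : Measurable f := measurable_of_radial f hfd
  rw [lintegral_eq_lintegral_meas_lt μ (ae_of_all _ hf0) hfm.aemeasurable,
    lintegral_eq_lintegral_meas_lt ν (ae_of_all _ hf0) hfm.aemeasurable]
  refine lintegral_mono fun t => ?_
  set S : Set (Rd d) := {a | t < f a} with hSdef
  have hSm : MeasurableSet S := measurableSet_lt measurable_const hfm
  have hrad : ∀ x ∈ S, ∀ y : Rd d, ‖y‖ ≤ ‖x‖ → y ∈ S :=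
    fun x hx y hy => lt_of_lt_of_le hx (hfd y x hy)
  rcases eq_empty_or_nonempty S with hne | hne
  · simp [hne]
  have hS0 : (0 : Rd d) ∈ S := by
    obtain ⟨x, hx⟩ := hne
    exact hrad x hx 0 (by simp)
  by_cases htop : volume S = ⊤
  · -- S must be the whole space
    have huniv : S = univ := by
      ext y
      simp only [mem_univ, iff_true]
      by_contra hy
      have hsub : S ⊆ ball 0 ‖y‖ := by
        intro x hx
        rw [mem_ball_zero_iff]
        by_contra h
        push_neg at h
        exact hy (hrad x hx y h)
      exact (ne_of_lt (lt_of_le_of_lt (measure_mono hsub) measure_ball_lt_top)) htop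
    rw [huniv]
    have hb : ∀ n : ℕ, μ (ball (0 : Rd d) n) ≤ ν univ := by
      intro n
      have hfin : volume (ball (0 : Rd d) n) ≠ ⊤ := measure_ball_lt_top.ne
      calc μ (ball (0 : Rd d) n)
          ≤ Cmeas μ ((volume (ball (0 : Rd d) n)).toReal) :=
            le_iSup₂_of_le (ball (0 : Rd d) n)
              ⟨measurableSet_ball, (ENNReal.ofReal_toReal hfin).symm⟩ le_rfl
        _ ≤ Cmeas ν ((volume (ball (0 : Rd d) n)).toReal) :=
            hC _ ENNReal.toReal_nonneg
        _ ≤ ν univ := iSup₂_le fun E _ => measure_mono (subset_univ E)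
    have hμuniv : μ univ = ⨆ n : ℕ, μ (ball (0 : Rd d) n) := by
      rw [← iUnion_ball_nat (0 : Rd d)]
      exact Directed.measure_iUnion
        (Monotone.directed_le fun m n hmn => ball_subset_ball (by exact_mod_cast hmn))
    rw [hμuniv]
    exact iSup_le hb
  · have hα : volume S = ENNReal.ofReal ((volume S).toReal) :=
      (ENNReal.ofReal_toReal htop).symm
    calc μ S ≤ Cmeas μ ((volume S).toReal) := le_iSup₂_of_le S ⟨hSm, hα⟩ le_rfl
      _ ≤ Cmeas ν ((volume S).toReal) := hC _ ENNReal.toReal_nonneg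
      _ ≤ ν S := iSup₂_le fun E hE =>
          bathtub ν hν S hSm hS0 hrad htop E hE.1 (hE.2.trans hα.symm)
end
end

section
/- Let μ, ν be finite positive Borel measures on ℝ^d, both symmetric decreasing, with μ(ℝ^d) = ν(ℝ^d) and C_μ(α) ≤ C_ν(α) for every α ≥ 0. Let g : ℝ^d → [0,∞) be symmetric increasing (i.e., radial and nondecreasing in |x|). Then ∫ g dμ ≥ ∫ g dν. -/
open MeasureTheory Set Metric ENNReal

noncomputable section

/-- A "ball-like" set (closed downward with respect to norm) is measurable. -/
lemma balllike_measurableSet {d : ℕ} {A : Set (Rd d)}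
    (h : ∀ x y : Rd d, y ∈ A → ‖x‖ ≤ ‖y‖ → x ∈ A) : MeasurableSet A := by
  have hA : A = norm ⁻¹' {r : ℝ | ∃ y ∈ A, r ≤ ‖y‖} := by
    ext x
    constructor
    · exact fun hx => ⟨x, hx, le_rfl⟩
    · rintro ⟨y, hy, hle⟩
      exact h x y hy hle
  rw [hA]
  have hlow : IsLowerSet {r : ℝ | ∃ y ∈ A, r ≤ ‖y‖} := by
    rintro a b hba ⟨y, hy, hle⟩
    exact ⟨y, hy, hba.trans hle⟩
  exact hlow.ordConnected.measurableSet.preimage measurable_norm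

/-- The bathtub principle: among sets of a given volume, a symmetric decreasing
measure is maximized on balls. -/
lemma balllike_max {d : ℕ} {ν : Measure (Rd d)} (hν : IsSymmDecMeasure ν)
    {A E : Set (Rd d)} (hA : MeasurableSet A) (hE : MeasurableSet E)
    (hball : ∀ x y : Rd d, y ∈ A → ‖x‖ ≤ ‖y‖ → x ∈ A)
    (hAne : A.Nonempty) (hAfin : volume A ≠ ∞) (hvol : volume E = volume A) :
    ν E ≤ ν A := by
  obtain ⟨f, c, hf, rfl⟩ := hν
  have h0A : (0 : Rd d) ∈ A := by
    obtain ⟨y, hy⟩ := hAne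
    exact hball 0 y hy (by simp)
  set ρ : Measure (Rd d) := volume.withDensity f with hρ
  -- the infimum of f on A
  set s : ℝ≥0∞ := ⨅ x ∈ A, f x with hs
  have hfE : ∀ x ∈ E \ A, f x ≤ s := by
    rintro x ⟨_, hxA⟩
    refine le_iInf₂ fun z hz => ?_
    have : ‖z‖ ≤ ‖x‖ := by
      by_contra hc
      exact hxA (hball x z hz (le_of_not_ge hc))
    exact hf z x this
  have hfA : ∀ x ∈ A \ E, s ≤ f x := fun x hx => biInf_le f hx.1
  -- volumes of the symmetric differences agree
  have hinterfin : volume (A ∩ E) ≠ ∞ :=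
    fun h => hAfin (top_le_iff.mp (h ▸ measure_mono inter_subset_left))
  have hvoldiff : volume (E \ A) = volume (A \ E) := by
    have h1 : volume (A ∩ E) + volume (E \ A) = volume E := by
      rw [inter_comm]; exact measure_inter_add_diff E hA
    have h2 : volume (A ∩ E) + volume (A \ E) = volume A :=
      measure_inter_add_diff A hE
    have := h1.trans (hvol.trans h2.symm)
    exact (ENNReal.add_right_inj hinterfin).mp this
  -- compare the absolutely continuous parts
  have hρdiff : ρ (E \ A) ≤ ρ (A \ E) := by
    have e1 : ρ (E \ A) = ∫⁻ x in E \ A, f x := withDensity_apply f (hE.diff hA)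
    have e2 : ρ (A \ E) = ∫⁻ x in A \ E, f x := withDensity_apply f (hA.diff hE)
    calc ρ (E \ A) = ∫⁻ x in E \ A, f x := e1
      _ ≤ ∫⁻ _ in E \ A, s := setLIntegral_mono' (hE.diff hA) hfE
      _ = s * volume (E \ A) := setLIntegral_const _ _
      _ = s * volume (A \ E) := by rw [hvoldiff]
      _ = ∫⁻ _ in A \ E, s := (setLIntegral_const _ _).symm
      _ ≤ ∫⁻ x in A \ E, f x := setLIntegral_mono' (hA.diff hE) hfA
      _ = ρ (A \ E) := e2.symm
  have hρ : ρ E ≤ ρ A := by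
    have h1 : ρ (E ∩ A) + ρ (E \ A) = ρ E := measure_inter_add_diff E hA
    have h2 : ρ (A ∩ E) + ρ (A \ E) = ρ A := measure_inter_add_diff A hE
    calc ρ E = ρ (E ∩ A) + ρ (E \ A) := h1.symm
      _ ≤ ρ (A ∩ E) + ρ (A \ E) := by
          rw [inter_comm]; exact add_le_add le_rfl hρdiff
      _ = ρ A := h2
  -- compare the Dirac parts
  have hdE : (Measure.dirac (0 : Rd d)) E ≤ 1 := by
    rw [Measure.dirac_apply' _ hE]
    exact Set.indicator_le_self' (fun _ _ => zero_le_one) 0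
  have hdA : (Measure.dirac (0 : Rd d)) A = 1 := by
    rw [Measure.dirac_apply' _ hA, Set.indicator_of_mem h0A]; rfl
  simp only [Measure.add_apply, Measure.smul_apply, smul_eq_mul]
  rw [hdA, mul_one]
  exact add_le_add hρ (by
    calc c * (Measure.dirac (0 : Rd d)) E ≤ c * 1 := mul_le_mul_right hdE c
      _ = c := mul_one c)


/-- Key comparison on "upper" sets. -/
lemma upper_meas_le {d : ℕ} (μ ν : Measure (Rd d)) [IsFiniteMeasure μ] [IsFiniteMeasure ν]
    (hν : IsSymmDecMeasure ν)
    (hmass : μ Set.univ = ν Set.univ)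
    (hC : ∀ α : ℝ, 0 ≤ α → Cmeas μ α ≤ Cmeas ν α)
    {S : Set (Rd d)} (hup : ∀ x y : Rd d, x ∈ S → ‖x‖ ≤ ‖y‖ → y ∈ S) :
    ν S ≤ μ S := by
  set A := Sᶜ with hAdef
  have hball : ∀ x y : Rd d, y ∈ A → ‖x‖ ≤ ‖y‖ → x ∈ A := by
    intro x y hy hle hx
    exact hy (hup x y hx hle)
  have hAm : MeasurableSet A := balllike_measurableSet hball
  have hSm : MeasurableSet S := by
    have := hAm.compl; rwa [hAdef, compl_compl] at this
  -- it suffices to show μ A ≤ ν A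
  suffices h : μ A ≤ ν A by
    have h1 : μ S + μ A = μ univ := measure_add_measure_compl hSm
    have h2 : ν S + ν A = ν univ := measure_add_measure_compl hSm
    have : ν S + ν A ≤ μ S + ν A := by
      rw [h2, ← hmass, ← h1]
      exact add_le_add le_rfl h
    exact (ENNReal.add_le_add_iff_right (measure_ne_top ν A)).mp this
  rcases eq_empty_or_nonempty A with hAe | hAne
  · simp [hAe]
  -- A is either the whole space or has finite volume
  by_cases hbd : ∃ r : ℝ, A ⊆ closedBall 0 r
  · obtain ⟨r, hr⟩ := hbd
    have hAfin : volume A ≠ ∞ := by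
      refine ne_top_of_le_ne_top ?_ (measure_mono hr)
      exact (measure_closedBall_lt_top).ne
    set α : ℝ := (volume A).toReal with hα
    have hvolA : volume A = ENNReal.ofReal α := by
      rw [hα, ENNReal.ofReal_toReal hAfin]
    have h1 : μ A ≤ Cmeas μ α := by
      refine le_iSup_of_le A ?_
      exact le_iSup_of_le ⟨hAm, hvolA.symm ▸ hvolA⟩ le_rfl
    have h2 : Cmeas ν α ≤ ν A := by
      refine iSup₂_le fun E hE => ?_
      exact balllike_max hν hAm hE.1 hball hAne hAfin (hE.2.trans hvolA.symm)
    exact h1.trans ((hC α ENNReal.toReal_nonneg).trans h2)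
  · -- A is unbounded, hence A = univ
    push_neg at hbd
    have hAuniv : A = univ := by
      ext x
      simp only [mem_univ, iff_true]
      obtain ⟨y, hy, hny⟩ := not_subset.mp (hbd ‖x‖)
      have : ‖x‖ ≤ ‖y‖ := by
        by_contra hc
        exact hny (mem_closedBall_zero_iff.mpr (le_of_not_ge hc))
      exact hball x y hy this
    rw [hAuniv, hmass]

/-- Testing the relation "less concentrated than" against symmetric increasing
functions, for measures of equal total mass. -/
theorem stmt7 {d : ℕ} (μ ν : Measure (Rd d)) [IsFiniteMeasure μ] [IsFiniteMeasure ν]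
    (hμ : IsSymmDecMeasure μ) (hν : IsSymmDecMeasure ν)
    (hmass : μ Set.univ = ν Set.univ)
    (hC : ∀ α : ℝ, 0 ≤ α → Cmeas μ α ≤ Cmeas ν α)
    (g : Rd d → ℝ) (hg0 : ∀ x, 0 ≤ g x)
    (hgi : ∀ x y : Rd d, ‖x‖ ≤ ‖y‖ → g x ≤ g y) :
    ∫⁻ x, ENNReal.ofReal (g x) ∂ν ≤ ∫⁻ x, ENNReal.ofReal (g x) ∂μ := by
  have hupper : ∀ t : ℝ, ∀ x y : Rd d, x ∈ {a | t < g a} → ‖x‖ ≤ ‖y‖ → y ∈ {a | t < g a} :=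
    fun t x y hx hle => lt_of_lt_of_le hx (hgi x y hle)
  have hgm : Measurable g := by
    apply measurable_of_Ioi
    intro t
    show MeasurableSet {a | t < g a}
    have h1 : MeasurableSet ({a : Rd d | t < g a}ᶜ) :=
      balllike_measurableSet (fun x y hy hle hx => hy (hupper t x y hx hle))
    have h2 := h1.compl
    rwa [compl_compl] at h2
  have key : ∀ t : ℝ, ν {a | t < g a} ≤ μ {a | t < g a} :=
    fun t => upper_meas_le μ ν hν hmass hC (hupper t)
  rw [lintegral_eq_lintegral_meas_lt ν (Filter.Eventually.of_forall hg0) hgm.aemeasurable,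
    lintegral_eq_lintegral_meas_lt μ (Filter.Eventually.of_forall hg0) hgm.aemeasurable]
  exact lintegral_mono fun t => key t
end
end

section
/- Let μ, ν be finite positive Borel measures on ℝ^d with Lebesgue decompositions μ(dx) = f(x)dx + β(dx) and ν(dx) = g(x)dx + γ(dx). If C_μ(α) ≤ C_ν(α) for all α ≥ 0, then for all h ≥ 0, ∫(f(x) − h)_+ dx + β(ℝ^d) ≤ ∫(g(x) − h)_+ dx + γ(ℝ^d). -/
open MeasureTheory Set Metric ENNReal

noncomputable section

/-- If `μ` is less concentrated than `ν`, then `Γ_μ(h) ≤ Γ_ν(h)` for all `h ≥ 0`,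
where `Γ_μ(h) = ∫ (f - h)_+ + β(ℝ^d)` for the Lebesgue decomposition
`μ = f dx + β`. -/
theorem stmt10 {d : ℕ} (μ ν : Measure (Rd d)) [IsFiniteMeasure μ] [IsFiniteMeasure ν]
    (f g : Rd d → ℝ≥0∞) (hf : Measurable f) (hg : Measurable g)
    (β γ : Measure (Rd d))
    (hβ : β ⟂ₘ (volume : Measure (Rd d))) (hγ : γ ⟂ₘ (volume : Measure (Rd d)))
    (hμ : μ = volume.withDensity f + β) (hν : ν = volume.withDensity g + γ)
    (hC : ∀ α : ℝ, 0 ≤ α → Cmeas μ α ≤ Cmeas ν α)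
    (h : ℝ≥0∞) :
    (∫⁻ x, (f x - h)) + β Set.univ ≤ (∫⁻ x, (g x - h)) + γ Set.univ := by
  obtain ⟨s, hs, hβs, hvs⟩ := hβ
  set N := sᶜ with hNdef
  have hNmeas : MeasurableSet N := hs.compl
  have hNvol : (volume : Measure (Rd d)) N = 0 := hvs
  have hβN : β Set.univ = β N := by
    rw [← measure_add_measure_compl (μ := β) hs, hβs, zero_add]
  -- integrability of f
  have hfint : ∫⁻ x, f x ≠ ⊤ := by
    have h1 : (volume.withDensity f) Set.univ ≤ μ Set.univ := by
      rw [hμ]; simp [Measure.add_apply]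
    rw [withDensity_apply _ MeasurableSet.univ, setLIntegral_univ] at h1
    exact (h1.trans_lt (measure_lt_top μ _)).ne
  -- key bound from the concentration hypothesis
  have key : ∀ E : Set (Rd d), MeasurableSet E → volume E ≠ ⊤ →
      μ E ≤ (∫⁻ x, (g x - h)) + γ Set.univ + h * volume E := by
    intro E hE hEfin
    have h1 : μ E ≤ Cmeas μ (volume E).toReal := by
      exact le_iSup₂ (f := fun (F : Set (Rd d)) (_ : MeasurableSet F ∧
        volume F = ENNReal.ofReal (volume E).toReal) => μ F) E
        ⟨hE, (ENNReal.ofReal_toReal hEfin).symm⟩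
    have h2 := hC (volume E).toReal ENNReal.toReal_nonneg
    have h3 : Cmeas ν (volume E).toReal ≤
        (∫⁻ x, (g x - h)) + γ Set.univ + h * ENNReal.ofReal (volume E).toReal := by
      apply iSup₂_le
      rintro F ⟨hFm, hFv⟩
      rw [hν, Measure.add_apply, withDensity_apply _ hFm]
      have hgF : ∫⁻ x in F, g x ≤ (∫⁻ x, (g x - h)) + h * volume F := by
        calc ∫⁻ x in F, g x ≤ ∫⁻ x in F, ((g x - h) + h) := by
              exact lintegral_mono fun x => le_tsub_add
          _ = (∫⁻ x in F, (g x - h)) + h * volume F := by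
              rw [lintegral_add_right _ measurable_const, setLIntegral_const]
          _ ≤ (∫⁻ x, (g x - h)) + h * volume F :=
              add_le_add_left (setLIntegral_le_lintegral _ _) _
      calc (∫⁻ x in F, g x) + γ F
          ≤ ((∫⁻ x, (g x - h)) + h * volume F) + γ Set.univ :=
            add_le_add hgF (measure_mono (Set.subset_univ _))
        _ = (∫⁻ x, (g x - h)) + γ Set.univ + h * volume F := by ring
        _ = (∫⁻ x, (g x - h)) + γ Set.univ + h * ENNReal.ofReal (volume E).toReal := by
            rw [hFv]
    rw [ENNReal.ofReal_toReal hEfin] at h3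
    exact h1.trans (h2.trans h3)
  -- the approximating sets
  set A : ℕ → Set (Rd d) := fun n => {x | h + ((n : ℝ≥0∞) + 1)⁻¹ < f x} with hAdef
  have hAm : ∀ n, MeasurableSet (A n) := fun n => measurableSet_lt measurable_const hf
  have hAmono : Monotone A := by
    intro n m hnm x hx
    simp only [hAdef, Set.mem_setOf_eq] at hx ⊢
    refine lt_of_le_of_lt ?_ hx
    gcongr
  have hAtop : h = ⊤ → ∀ n, A n = ∅ := by
    intro hh n
    ext x
    simp [hAdef, hh]
  have hAfin : ∀ n, volume (A n) ≠ ⊤ := by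
    intro n
    rcases eq_or_ne h ⊤ with hh | hh
    · rw [hAtop hh n]; simp
    · have hsub : A n ⊆ {x | h + ((n : ℝ≥0∞) + 1)⁻¹ ≤ f x} := by
        intro x hx
        simp only [hAdef, Set.mem_setOf_eq] at hx ⊢
        exact hx.le
      have hc0 : h + ((n : ℝ≥0∞) + 1)⁻¹ ≠ 0 := by
        simp [ENNReal.inv_ne_zero, add_eq_zero]
      have hctop : h + ((n : ℝ≥0∞) + 1)⁻¹ ≠ ⊤ := by
        refine ENNReal.add_ne_top.mpr ⟨hh, ?_⟩
        simp [ENNReal.inv_ne_top]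
      have := meas_ge_le_lintegral_div (μ := (volume : Measure (Rd d)))
        hf.aemeasurable hc0 hctop
      refine ((measure_mono hsub).trans this).trans_lt ?_ |>.ne
      exact ENNReal.div_lt_top hfint hc0
  have hmulfin : ∀ n, h * volume (A n) ≠ ⊤ := by
    intro n
    rcases eq_or_ne h ⊤ with hh | hh
    · rw [hAtop hh n]; simp
    · exact ENNReal.mul_ne_top hh (hAfin n)
  set ρ : Measure (Rd d) := volume.withDensity (fun x => f x - h) with hρdef
  have hsubmeas : Measurable (fun x => f x - h) := hf.sub measurable_const
  -- the main step for each n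
  have step : ∀ n, ρ (A n) + β Set.univ ≤ (∫⁻ x, (g x - h)) + γ Set.univ := by
    intro n
    have hEm : MeasurableSet (A n ∪ N) := (hAm n).union hNmeas
    have hEvol : volume (A n ∪ N) = volume (A n) :=
      le_antisymm ((measure_union_le _ _).trans (by simp [hNvol]))
        (measure_mono Set.subset_union_left)
    have hEfin : volume (A n ∪ N) ≠ ⊤ := by rw [hEvol]; exact hAfin n
    have hkey := key _ hEm hEfin
    rw [hEvol] at hkey
    -- lower bound for μ (A n ∪ N)
    have hlow : ρ (A n) + h * volume (A n) + β Set.univ ≤ μ (A n ∪ N) := by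
      rw [hμ, Measure.add_apply]
      have h1 : β Set.univ ≤ β (A n ∪ N) := by
        rw [hβN]; exact measure_mono (Set.subset_union_right)
      have h2 : ρ (A n) + h * volume (A n) ≤ (volume.withDensity f) (A n ∪ N) := by
        have h3 : (volume.withDensity f) (A n) ≤ (volume.withDensity f) (A n ∪ N) :=
          measure_mono Set.subset_union_left
        refine le_trans ?_ h3
        rw [withDensity_apply _ (hAm n), withDensity_apply _ (hAm n)]
        have h4 : ∫⁻ x in A n, f x = ∫⁻ x in A n, ((f x - h) + h) := by
          refine setLIntegral_congr_fun (hAm n) (fun x hx => ?_)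
          have hx' : h + ((n : ℝ≥0∞) + 1)⁻¹ < f x := by simpa [hAdef] using hx
          exact (tsub_add_cancel_of_le ((le_add_right le_rfl).trans hx'.le)).symm
        rw [h4, lintegral_add_right _ measurable_const, setLIntegral_const]
      exact add_le_add h2 h1
    have hc := hlow.trans hkey
    have hre : ρ (A n) + β Set.univ + h * volume (A n) ≤
        ((∫⁻ x, (g x - h)) + γ Set.univ) + h * volume (A n) := by
      calc ρ (A n) + β Set.univ + h * volume (A n)
          = ρ (A n) + h * volume (A n) + β Set.univ := by ring
        _ ≤ (∫⁻ x, (g x - h)) + γ Set.univ + h * volume (A n) := hc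
    exact (ENNReal.add_le_add_iff_right (hmulfin n)).mp hre
  -- the supremum computation
  have hUnion : ρ (⋃ n, A n) = ⨆ n, ρ (A n) :=
    hAmono.directed_le.measure_iUnion
  have hcompl : ρ ((⋃ n, A n)ᶜ) = 0 := by
    have hUm : MeasurableSet (⋃ n, A n) := MeasurableSet.iUnion hAm
    rw [hρdef, withDensity_apply _ hUm.compl]
    have : ∀ x ∈ (⋃ n, A n)ᶜ, f x - h = 0 := by
      intro x hx
      rw [Set.mem_compl_iff, Set.mem_iUnion] at hx
      push_neg at hx
      refine tsub_eq_zero_of_le ?_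
      rcases eq_or_ne h ⊤ with hh | hh
      · simp [hh]
      · refine ENNReal.le_of_forall_pos_le_add fun ε hε hlt => ?_
        obtain ⟨n, hn⟩ := ENNReal.exists_inv_nat_lt
          (show ((ε : ℝ≥0∞)) ≠ 0 by exact_mod_cast hε.ne')
        have h1 : f x ≤ h + ((n : ℝ≥0∞) + 1)⁻¹ := not_lt.mp (by
          simpa [hAdef] using hx n)
        refine h1.trans ?_
        gcongr
        refine le_of_lt (lt_of_le_of_lt ?_ hn)
        gcongr
        exact le_add_right le_rfl
    calc ∫⁻ x in (⋃ n, A n)ᶜ, (f x - h)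
        = ∫⁻ x in (⋃ n, A n)ᶜ, 0 :=
          setLIntegral_congr_fun hUm.compl this
      _ = 0 := by simp
  have hρuniv : ρ Set.univ = ⨆ n, ρ (A n) := by
    rw [← hUnion]
    refine le_antisymm ?_ (measure_mono (Set.subset_univ _))
    calc ρ Set.univ = ρ ((⋃ n, A n) ∪ (⋃ n, A n)ᶜ) := by rw [Set.union_compl_self]
      _ ≤ ρ (⋃ n, A n) + ρ ((⋃ n, A n)ᶜ) := measure_union_le _ _
      _ = ρ (⋃ n, A n) := by rw [hcompl, add_zero]
  have hρint : ρ Set.univ = ∫⁻ x, (f x - h) := by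
    rw [hρdef, withDensity_apply _ MeasurableSet.univ, setLIntegral_univ]
  calc (∫⁻ x, (f x - h)) + β Set.univ = (⨆ n, ρ (A n)) + β Set.univ := by
        rw [← hρint, hρuniv]
    _ = ⨆ n, (ρ (A n) + β Set.univ) := ENNReal.iSup_add _
    _ ≤ (∫⁻ x, (g x - h)) + γ Set.univ := iSup_le step
end
end

section
/- Let μ, ν be probability measures on ℝ^d with ν symmetric decreasing, ∫|x| dμ(x) < ∞, and C_μ(α) ≤ C_ν(α) for all α ≥ 0. Then Var(μ) ≥ Var(ν), where Var(μ) := ∫|x|^2 dμ − |∫ x dμ|^2. -/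
open MeasureTheory Set Metric ENNReal

noncomputable section

/-- The variance of a probability measure, valued in `ℝ≥0∞`:
`Var(μ) = ∫ |x|² dμ - |∫ x dμ|²`. -/
def varE {d : ℕ} (μ : Measure (Rd d)) : ℝ≥0∞ :=
  (∫⁻ x, ENNReal.ofReal (‖x‖ ^ 2) ∂μ) - ENNReal.ofReal (‖∫ x, x ∂μ‖ ^ 2)

lemma rdExistsNormEq {d : ℕ} (hd : 0 < d) {r : ℝ} (hr : 0 ≤ r) :
    ∃ y : Rd d, ‖y‖ = r := by
  refine ⟨r • EuclideanSpace.single (⟨0, hd⟩ : Fin d) (1:ℝ), ?_⟩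
  rw [norm_smul]
  simp [abs_of_nonneg hr]

lemma bathtub_s15 {d : ℕ} (hd : 0 < d) (f : Rd d → ℝ≥0∞)
    (hf : ∀ x y : Rd d, ‖x‖ ≤ ‖y‖ → f y ≤ f x) {r : ℝ} (hr : 0 ≤ r)
    {E : Set (Rd d)} (hE : MeasurableSet E)
    (hvol : volume E = volume (closedBall (0:Rd d) r)) :
    ∫⁻ x in E, f x ∂volume ≤ ∫⁻ x in closedBall (0:Rd d) r, f x ∂volume := by
  set B := closedBall (0:Rd d) r with hB
  have hBm : MeasurableSet B := measurableSet_closedBall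
  obtain ⟨y₀, hy₀⟩ := rdExistsNormEq hd hr
  have hvolEB : volume (E \ B) = volume (B \ E) := by
    have h1 : volume (E \ B) + volume (E ∩ B) = volume E := measure_diff_add_inter E hBm
    have h2 : volume (B \ E) + volume (B ∩ E) = volume B := measure_diff_add_inter B hE
    rw [inter_comm] at h2
    have hfin : volume (E ∩ B) ≠ ∞ :=
      ((measure_mono inter_subset_right).trans_lt measure_closedBall_lt_top).ne
    have := h1.trans (hvol.trans h2.symm)
    exact ENNReal.add_left_inj hfin |>.mp this
  have hupper : ∫⁻ x in E \ B, f x ∂volume ≤ f y₀ * volume (E \ B) := by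
    rw [← setLIntegral_const]
    refine lintegral_mono_ae ((ae_restrict_iff' (hE.diff hBm)).2 (ae_of_all _ ?_))
    intro x hx
    refine hf y₀ x ?_
    have : r < ‖x‖ := by
      have := hx.2
      simpa [hB, mem_closedBall, dist_zero_right, not_le] using this
    rw [hy₀]; exact this.le
  have hlower : f y₀ * volume (B \ E) ≤ ∫⁻ x in B \ E, f x ∂volume := by
    rw [← setLIntegral_const]
    refine lintegral_mono_ae ((ae_restrict_iff' (hBm.diff hE)).2 (ae_of_all _ ?_))
    intro x hx
    refine hf x y₀ ?_
    have : ‖x‖ ≤ r := by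
      have := hx.1
      simpa [hB, mem_closedBall, dist_zero_right] using this
    rw [hy₀]; exact this
  calc ∫⁻ x in E, f x ∂volume = ∫⁻ x in E ∩ B, f x ∂volume + ∫⁻ x in E \ B, f x ∂volume :=
        (lintegral_inter_add_diff f E hBm).symm
    _ ≤ ∫⁻ x in E ∩ B, f x ∂volume + ∫⁻ x in B \ E, f x ∂volume := by
        refine add_le_add_right (hupper.trans ?_) _
        rw [hvolEB]; exact hlower
    _ = ∫⁻ x in B ∩ E, f x ∂volume + ∫⁻ x in B \ E, f x ∂volume := by rw [inter_comm]
    _ = ∫⁻ x in B, f x ∂volume := lintegral_inter_add_diff f B hE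

lemma ball_meas_le {d : ℕ} (hd : 0 < d) (μ ν : Measure (Rd d))
    [IsProbabilityMeasure ν]
    (hν : IsSymmDecMeasure ν)
    (hC : ∀ α : ℝ, 0 ≤ α → Cmeas μ α ≤ Cmeas ν α)
    (m : Rd d) {r : ℝ} (hr : 0 ≤ r) :
    μ (closedBall m r) ≤ ν (closedBall (0:Rd d) r) := by
  obtain ⟨f, c, hf, hνeq⟩ := hν
  set α := (volume (closedBall (0:Rd d) r)).toReal with hαdef
  have hfin : volume (closedBall (0:Rd d) r) ≠ ∞ := measure_closedBall_lt_top.ne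
  have hα : ENNReal.ofReal α = volume (closedBall (0:Rd d) r) := ENNReal.ofReal_toReal hfin
  have h1 : μ (closedBall m r) ≤ Cmeas μ α := by
    refine le_iSup₂_of_le (closedBall m r) ⟨measurableSet_closedBall, ?_⟩ le_rfl
    rw [hα, Measure.addHaar_closedBall_center]
  have h3 : Cmeas ν α ≤ ν (closedBall (0:Rd d) r) := by
    refine iSup₂_le ?_
    rintro E ⟨hEm, hEvol⟩
    rw [hνeq]
    simp only [Measure.add_apply, Measure.smul_apply, smul_eq_mul]
    rw [withDensity_apply _ hEm, withDensity_apply _ measurableSet_closedBall]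
    have hdB : (Measure.dirac (0:Rd d)) (closedBall (0:Rd d) r) = 1 := by
      rw [Measure.dirac_apply' _ measurableSet_closedBall]
      simp [mem_closedBall, hr]
    refine add_le_add (bathtub_s15 hd f hf hr hEm (by rw [hEvol, hα])) ?_
    rw [hdB, mul_one]
    have h1 : (Measure.dirac (0:Rd d)) E ≤ (Measure.dirac (0:Rd d)) univ := measure_mono (subset_univ E)
    rw [measure_univ] at h1
    calc c * (Measure.dirac (0:Rd d)) E ≤ c * 1 := mul_le_mul_right h1 c
      _ = c := mul_one c
  exact h1.trans ((hC α ENNReal.toReal_nonneg).trans h3)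

lemma main_ineq {d : ℕ} (hd : 0 < d) (μ ν : Measure (Rd d))
    [IsProbabilityMeasure μ] [IsProbabilityMeasure ν]
    (hν : IsSymmDecMeasure ν)
    (hC : ∀ α : ℝ, 0 ≤ α → Cmeas μ α ≤ Cmeas ν α) (m : Rd d) :
    ∫⁻ x, ENNReal.ofReal (‖x‖ ^ 2) ∂ν ≤ ∫⁻ x, ENNReal.ofReal (‖x - m‖ ^ 2) ∂μ := by
  rw [lintegral_eq_lintegral_meas_lt ν (ae_of_all _ fun x => sq_nonneg ‖x‖)
    (measurable_norm.pow_const 2).aemeasurable]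
  rw [lintegral_eq_lintegral_meas_lt μ (ae_of_all _ fun x => sq_nonneg ‖x - m‖)
    (((measurable_id.sub measurable_const).norm.pow_const 2)).aemeasurable]
  refine lintegral_mono_ae ((ae_restrict_iff' measurableSet_Ioi).2 (ae_of_all _ ?_))
  intro t ht
  have ht' : (0:ℝ) < t := ht
  have hrt : (0:ℝ) ≤ Real.sqrt t := Real.sqrt_nonneg t
  have hiff : ∀ y : ℝ, 0 ≤ y → (t < y ^ 2 ↔ Real.sqrt t < y) := by
    intro y hy
    constructor
    · intro h
      have := Real.sqrt_lt_sqrt ht'.le h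
      rwa [Real.sqrt_sq hy] at this
    · intro h
      nlinarith [Real.sq_sqrt ht'.le]
  have hset1 : {x : Rd d | t < ‖x‖ ^ 2} = (closedBall (0:Rd d) (Real.sqrt t))ᶜ := by
    ext x
    simp only [mem_setOf_eq, mem_compl_iff, mem_closedBall, dist_zero_right, not_le]
    exact hiff ‖x‖ (norm_nonneg x)
  have hset2 : {x : Rd d | t < ‖x - m‖ ^ 2} = (closedBall m (Real.sqrt t))ᶜ := by
    ext x
    simp only [mem_setOf_eq, mem_compl_iff, mem_closedBall, dist_eq_norm, not_le]
    exact hiff ‖x - m‖ (norm_nonneg _)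
  rw [hset1, hset2,
    measure_compl measurableSet_closedBall (measure_ne_top _ _),
    measure_compl measurableSet_closedBall (measure_ne_top _ _),
    measure_univ, measure_univ]
  exact tsub_le_tsub_left (ball_meas_le hd μ ν hν hC m hrt) 1

/-- If `μ` is less concentrated than the symmetric decreasing probability measure `ν`
and has a finite first moment, then `Var(μ) ≥ Var(ν)`. -/
theorem stmt15 {d : ℕ} (μ ν : Measure (Rd d))
    [IsProbabilityMeasure μ] [IsProbabilityMeasure ν]
    (hν : IsSymmDecMeasure ν)
    (hmom : Integrable (fun x : Rd d => ‖x‖) μ)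
    (hC : ∀ α : ℝ, 0 ≤ α → Cmeas μ α ≤ Cmeas ν α) :
    varE ν ≤ varE μ := by
  rcases Nat.eq_zero_or_pos d with hd | hd
  · subst hd
    have h0 : ∀ x : Rd 0, ENNReal.ofReal (‖x‖ ^ 2) = 0 := by
      intro x
      rw [Subsingleton.elim x 0, norm_zero]
      simp
    have : varE ν = 0 := by
      rw [varE, lintegral_congr h0, lintegral_zero, zero_tsub]
    rw [this]; exact zero_le
  · by_cases hfin : (∫⁻ x, ENNReal.ofReal (‖x‖ ^ 2) ∂μ) = ∞
    · have : varE μ = ∞ := by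
        rw [varE, hfin, ENNReal.top_sub ofReal_ne_top]
      rw [this]; exact le_top
    · set m := ∫ x, x ∂μ with hm
      have hid : Integrable (fun x : Rd d => x) μ :=
        (integrable_norm_iff aestronglyMeasurable_id).mp hmom
      have hsq : Integrable (fun x : Rd d => ‖x‖ ^ 2) μ := by
        refine ⟨(measurable_norm.pow_const 2).aestronglyMeasurable, ?_⟩
        rw [hasFiniteIntegral_iff_ofReal (ae_of_all _ fun x => sq_nonneg ‖x‖)]
        exact lt_top_iff_ne_top.2 hfin
      have hsub : Integrable (fun x : Rd d => ‖x - m‖ ^ 2) μ := by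
        have hg : Integrable (fun x : Rd d => ‖x‖ ^ 2 + (2 * ‖m‖) * ‖x‖ + ‖m‖ ^ 2) μ :=
          (hsq.add (hmom.const_mul (2 * ‖m‖))).add (integrable_const _)
        refine hg.mono' (((measurable_id.sub measurable_const).norm.pow_const 2)).aestronglyMeasurable
          (ae_of_all _ fun x => ?_)
        have h1 : ‖x - m‖ ≤ ‖x‖ + ‖m‖ := norm_sub_le x m
        have h2 : (0:ℝ) ≤ ‖x - m‖ := norm_nonneg _
        rw [Real.norm_eq_abs, abs_of_nonneg (sq_nonneg _)]
        nlinarith [norm_nonneg x, norm_nonneg m]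
      have hinner : Integrable (fun x : Rd d => (inner ℝ x m : ℝ)) μ := by
        refine (hmom.const_mul ‖m‖).mono'
          ((continuous_id.inner continuous_const).aestronglyMeasurable) (ae_of_all _ fun x => ?_)
        rw [Real.norm_eq_abs]
        calc |(inner ℝ x m : ℝ)| ≤ ‖x‖ * ‖m‖ := abs_real_inner_le_norm x m
          _ = ‖m‖ * ‖x‖ := mul_comm _ _
      have hiv : ∫ x, (inner ℝ x m : ℝ) ∂μ = ‖m‖ ^ 2 := by
        have h1 : ∫ x, (inner ℝ x m : ℝ) ∂μ = ∫ x, (inner ℝ m x : ℝ) ∂μ := by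
          simp_rw [real_inner_comm]
        rw [h1, integral_inner hid m, ← hm, real_inner_self_eq_norm_sq]
      have hexp : ∫ x, ‖x - m‖ ^ 2 ∂μ = ∫ x, ‖x‖ ^ 2 ∂μ - ‖m‖ ^ 2 := by
        have hint2 : Integrable (fun x : Rd d => ‖x‖ ^ 2 - 2 * (inner ℝ x m : ℝ)) μ :=
          hsq.sub (hinner.const_mul 2)
        have h1 : ∫ x, ‖x - m‖ ^ 2 ∂μ
            = ∫ x, (‖x‖ ^ 2 - 2 * (inner ℝ x m : ℝ) + ‖m‖ ^ 2) ∂μ :=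
          integral_congr_ae (ae_of_all _ fun x => norm_sub_sq_real x m)
        rw [h1, integral_add hint2 (integrable_const _),
          integral_sub hsq (hinner.const_mul 2), integral_const_mul, hiv, integral_const]
        simp [measure_univ]
        ring
      calc varE ν ≤ ∫⁻ x, ENNReal.ofReal (‖x‖ ^ 2) ∂ν := tsub_le_self
        _ ≤ ∫⁻ x, ENNReal.ofReal (‖x - m‖ ^ 2) ∂μ := main_ineq hd μ ν hν hC m
        _ = ENNReal.ofReal (∫ x, ‖x - m‖ ^ 2 ∂μ) :=
            (ofReal_integral_eq_lintegral_ofReal hsub (ae_of_all _ fun x => sq_nonneg _)).symm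
        _ = ENNReal.ofReal (∫ x, ‖x‖ ^ 2 ∂μ) - ENNReal.ofReal (‖m‖ ^ 2) := by
            rw [hexp, ENNReal.ofReal_sub _ (sq_nonneg ‖m‖)]
        _ = (∫⁻ x, ENNReal.ofReal (‖x‖ ^ 2) ∂μ) - ENNReal.ofReal (‖m‖ ^ 2) := by
            rw [ofReal_integral_eq_lintegral_ofReal hsq (ae_of_all _ fun x => sq_nonneg _)]
        _ = varE μ := rfl
end
end
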